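/- Let U and W be finite nonempty types, and let P, Q be probability mass functions on U × W such that for every u ∈ U with P_U(u) > 0 and Q_U(u) > 0, the conditional distribution of W given u is the same under P and Q. Then the Jensen–Shannon divergence of the joints equals that of the U-marginals: D_JS(P ‖ Q) = D_JS(P_U ‖ Q_U), where P_U and Q_U denote the marginals on U of P and Q. -/

import Mathlib

open scoped BigOperators ENNReal

noncomputable section

/-- Kullback–Leibler divergence between two PMFs on a finite type (real-valued;
with the convention that the summand is `0` when `μ x = 0`). -/
def klDiv {α : Type*} [Fintype α] (μ ν : PMF α) : ℝ :=
  ∑ x, if μ x = 0 then 0 else (μ x).toReal * Real.log ((μ x).toReal / (ν x).toReal)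

/-- The mixture `½ (μ + ν)` of two PMFs on a finite type. -/
def mix {α : Type*} [Fintype α] (μ ν : PMF α) : PMF α :=
  ⟨fun x => (μ x + ν x) / 2, by
    have h1 : (∑ x, μ x) = 1 := by simpa [tsum_fintype] using μ.tsum_coe
    have h2 : (∑ x, ν x) = 1 := by simpa [tsum_fintype] using ν.tsum_coe
    have key : (∑ x, (μ x + ν x) / 2) = 1 := by
      simp only [div_eq_mul_inv, ← Finset.sum_mul]
      rw [Finset.sum_add_distrib, h1, h2, one_add_one_eq_two]
      exact ENNReal.mul_inv_cancel two_ne_zero (by simp)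
    simpa [key] using hasSum_fintype (fun x => (μ x + ν x) / 2)⟩

/-- Jensen–Shannon divergence: `½ D_KL(μ ‖ M) + ½ D_KL(ν ‖ M)` with `M = ½(μ + ν)`. -/
def jsDiv {α : Type*} [Fintype α] (μ ν : PMF α) : ℝ :=
  klDiv μ (mix μ ν) / 2 + klDiv ν (mix μ ν) / 2

/-- Product of two PMFs. -/
def prodPMF {α β : Type*} (μ : PMF α) (ν : PMF β) : PMF (α × β) :=
  μ.bind fun a => ν.map (Prod.mk a)

/-- Mutual information of a joint PMF: `D_KL(μ ‖ μ₁ ⊗ μ₂)`. -/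
def mutualInfo {α β : Type*} [Fintype α] [Fintype β] (μ : PMF (α × β)) : ℝ :=
  klDiv μ (prodPMF (μ.map Prod.fst) (μ.map Prod.snd))

/-- Shannon entropy of an `ℝ≥0∞`-valued mass function. -/
def entropy {α : Type*} [Fintype α] (f : α → ℝ≥0∞) : ℝ :=
  -∑ x, (f x).toReal * Real.log (f x).toReal

/-- Conditional distribution of the second coordinate given the first:
`μ(a, ·) / μ_1(a)`. -/
def condDist {α β : Type*} (μ : PMF (α × β)) (a : α) : β → ℝ≥0∞ :=
  fun b => μ (a, b) / (μ.map Prod.fst) a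

/-- Model-output joint: the law of `(X, Y_θ)` where `X ∼ μX` and `Y_θ ∼ θ(X)`. -/
def modelJoint {α β : Type*} (μX : PMF α) (θ : α → PMF β) : PMF (α × β) :=
  μX.bind fun x => (θ x).map (Prod.mk x)

/-- Marginal of a PMF on `U × A × D` on the first coordinate. -/
def margU {U A D : Type*} (μ : PMF (U × A × D)) : PMF U := μ.map fun p => p.1

/-- Marginal of a PMF on `U × A × D` on the second coordinate. -/
def margA {U A D : Type*} (μ : PMF (U × A × D)) : PMF A := μ.map fun p => p.2.1

/-- Marginal of a PMF on `U × A × D` on the third coordinate. -/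
def margD {U A D : Type*} (μ : PMF (U × A × D)) : PMF D := μ.map fun p => p.2.2


lemma map_fst_apply' {U W : Type*} [Fintype U] [Fintype W] (P : PMF (U × W)) (u : U) :
    (P.map Prod.fst) u = ∑ w, P (u, w) := by
  rw [PMF.map_apply, tsum_fintype, Fintype.sum_prod_type]
  rw [Finset.sum_eq_single u]
  · simp
  · intro a _ ha
    simp [(Ne.symm ha : u ≠ a)]
  · intro h; exact absurd (Finset.mem_univ u) h

lemma mix_apply' {α : Type*} [Fintype α] (μ ν : PMF α) (x : α) :
    (mix μ ν) x = (μ x + ν x) / 2 := rfl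

lemma mix_comm' {α : Type*} [Fintype α] (μ ν : PMF α) : mix μ ν = mix ν μ := by
  apply PMF.ext
  intro x
  rw [mix_apply', mix_apply', add_comm]

lemma mix_toReal {α : Type*} [Fintype α] (μ ν : PMF α) (x : α) :
    ((mix μ ν) x).toReal = ((μ x).toReal + (ν x).toReal) / 2 := by
  rw [mix_apply', ENNReal.toReal_div, ENNReal.toReal_add (PMF.apply_ne_top μ x)
    (PMF.apply_ne_top ν x)]
  norm_num

lemma klDiv_cond {U W : Type*} [Fintype U] [Fintype W] (P Q : PMF (U × W))
    (hcond : ∀ u : U, (P.map Prod.fst) u ≠ 0 → (Q.map Prod.fst) u ≠ 0 →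
      condDist P u = condDist Q u) :
    klDiv P (mix P Q) = klDiv (P.map Prod.fst) (mix (P.map Prod.fst) (Q.map Prod.fst)) := by
  unfold klDiv
  rw [Fintype.sum_prod_type]
  apply Finset.sum_congr rfl
  intro u _
  by_cases hPU : (P.map Prod.fst) u = 0
  · have hP0 : ∀ w, P (u, w) = 0 := by
      intro w
      have := map_fst_apply' P u
      rw [hPU] at this
      have := (Finset.sum_eq_zero_iff.mp this.symm) w (Finset.mem_univ w)
      exact this
    rw [if_pos hPU]
    apply Finset.sum_eq_zero
    intro w _
    rw [if_pos (hP0 w)]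
  · rw [if_neg hPU]
    set pU : ℝ := ((P.map Prod.fst) u).toReal with hpUdef
    set qU : ℝ := ((Q.map Prod.fst) u).toReal with hqUdef
    have hpUpos : 0 < pU :=
      ENNReal.toReal_pos hPU (PMF.apply_ne_top _ u)
    have hqUnonneg : 0 ≤ qU := ENNReal.toReal_nonneg
    have key : ∀ w, (Q (u, w)).toReal * pU = (P (u, w)).toReal * qU := by
      intro w
      by_cases hQU : (Q.map Prod.fst) u = 0
      · have hQ0 : Q (u, w) = 0 := by
          have := map_fst_apply' Q u
          rw [hQU] at this
          exact (Finset.sum_eq_zero_iff.mp this.symm) w (Finset.mem_univ w)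
        have hq0 : qU = 0 := by rw [hqUdef, hQU]; simp
        rw [hQ0, hq0]; simp
      · have hc := congrFun (hcond u hPU hQU) w
        simp only [condDist] at hc
        have hc' : (P (u, w)).toReal / pU = (Q (u, w)).toReal / qU := by
          rw [hpUdef, hqUdef, ← ENNReal.toReal_div, ← ENNReal.toReal_div, hc]
        have hpU' : pU ≠ 0 := ne_of_gt hpUpos
        have hqU' : qU ≠ 0 :=
          ne_of_gt (ENNReal.toReal_pos hQU (PMF.apply_ne_top _ u))
        field_simp at hc'
        linarith [hc']
    have hsum : ∀ w : W,
        (if P (u, w) = 0 then (0 : ℝ) else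
          (P (u, w)).toReal * Real.log ((P (u, w)).toReal / ((mix P Q) (u, w)).toReal))
        = (if P (u, w) = 0 then (0 : ℝ) else (P (u, w)).toReal) *
            Real.log (pU / ((pU + qU) / 2)) := by
      intro w
      by_cases hp : P (u, w) = 0
      · simp [hp]
      · rw [if_neg hp, if_neg hp]
        congr 2
        set p : ℝ := (P (u, w)).toReal with hpdef
        set q : ℝ := (Q (u, w)).toReal with hqdef
        have hppos : 0 < p := ENNReal.toReal_pos hp (PMF.apply_ne_top _ _)
        have hqnonneg : 0 ≤ q := ENNReal.toReal_nonneg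
        rw [mix_toReal]
        rw [div_eq_div_iff (by positivity) (by positivity)]
        have := key w
        ring_nf
        nlinarith [key w]
    calc
      (∑ w, if P (u, w) = 0 then (0 : ℝ) else
          (P (u, w)).toReal * Real.log ((P (u, w)).toReal / ((mix P Q) (u, w)).toReal))
        = ∑ w, (if P (u, w) = 0 then (0 : ℝ) else (P (u, w)).toReal) *
            Real.log (pU / ((pU + qU) / 2)) := by
          exact Finset.sum_congr rfl fun w _ => hsum w
      _ = (∑ w, (if P (u, w) = 0 then (0 : ℝ) else (P (u, w)).toReal)) *
            Real.log (pU / ((pU + qU) / 2)) := by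
          rw [← Finset.sum_mul]
      _ = pU * Real.log (pU / ((pU + qU) / 2)) := by
          congr 1
          have : ∀ w : W, (if P (u, w) = 0 then (0 : ℝ) else (P (u, w)).toReal)
              = (P (u, w)).toReal := by
            intro w
            by_cases hp : P (u, w) = 0
            · simp [hp]
            · rw [if_neg hp]
          rw [Finset.sum_congr rfl fun w _ => this w]
          rw [hpUdef, map_fst_apply' P u, ENNReal.toReal_sum fun w _ => PMF.apply_ne_top _ _]
      _ = (P.map Prod.fst u).toReal *
            Real.log ((P.map Prod.fst u).toReal /
              ((mix (P.map Prod.fst) (Q.map Prod.fst)) u).toReal) := by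
          rw [mix_toReal]

/-- if `P` and `Q` on `U × W` have the same conditional distribution of `W`
given any `u` with positive marginal probability under both, then the Jensen–Shannon
divergence of the joints equals that of the `U`-marginals. -/
theorem jsDiv_eq_marginal_jsDiv_of_cond_eq
    {U W : Type*} [Fintype U] [Nonempty U] [Fintype W] [Nonempty W]
    (P Q : PMF (U × W))
    (hcond : ∀ u : U, (P.map Prod.fst) u ≠ 0 → (Q.map Prod.fst) u ≠ 0 →
      condDist P u = condDist Q u) :
    jsDiv P Q = jsDiv (P.map Prod.fst) (Q.map Prod.fst) := by
  have hcond' : ∀ u : U, (Q.map Prod.fst) u ≠ 0 → (P.map Prod.fst) u ≠ 0 →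
      condDist Q u = condDist P u := fun u hq hp => (hcond u hp hq).symm
  have h1 := klDiv_cond P Q hcond
  have h2 := klDiv_cond Q P hcond'
  unfold jsDiv
  rw [h1, mix_comm' P Q, h2, mix_comm' (Q.map Prod.fst) (P.map Prod.fst)]

end
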